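/- Let k ≥ 2, L ≥ 3, let T : Π_L → Σ_k be the map constructed from the proper subshift Π_L, and let φ : Σ_k → ℝ be continuous. Then T maps I_φ(σ) ∩ Π_L into I_φ(σ), and for every a ∈ ℝ, T maps R_φ(a) ∩ Π_L into R_φ(a); that is, if the Birkhoff averages of φ along the orbit of y diverge (resp. converge to a), the same holds for T(y). -/
import Mathlib


open Filter Topology MeasureTheory

/-- Upper density of a set of naturals. -/
noncomputable def upperDensity (S : Set ℕ) : ℝ :=
  Filter.limsup (fun n => ((S ∩ Set.Iio n).ncard : ℝ) / n) Filter.atTop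

/-- Lower density of a set of naturals. -/
noncomputable def lowerDensity (S : Set ℕ) : ℝ :=
  Filter.liminf (fun n => ((S ∩ Set.Iio n).ncard : ℝ) / n) Filter.atTop

/-- Banach upper density: limsup over the interval length of the maximal
proportion of `S` in an interval of that length. -/
noncomputable def banachUpperDensity (S : Set ℕ) : ℝ :=
  Filter.limsup (fun N => ⨆ a : ℕ, ((S ∩ Set.Ico a (a + N)).ncard : ℝ) / N) Filter.atTop

/-- Banach lower density. -/
noncomputable def banachLowerDensity (S : Set ℕ) : ℝ :=
  Filter.liminf (fun N => ⨅ a : ℕ, ((S ∩ Set.Ico a (a + N)).ncard : ℝ) / N) Filter.atTop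

/-- The shift map on the full shift `Σ_k = {0, …, k-1}^ℕ`. -/
def shift {k : ℕ} (x : ℕ → Fin k) : ℕ → Fin k := fun n => x (n + 1)

/-- The metric `d(x,y) = Σ_{n ≥ 1} δ(x_n, y_n)/2^n` on `Σ_k` (sequences indexed from `0`). -/
noncomputable def shiftDist {k : ℕ} (x y : ℕ → Fin k) : ℝ :=
  ∑' n : ℕ, if x n = y n then 0 else (1 / 2) ^ (n + 1)

/-- The open ball `B_ε(x)` for the metric `shiftDist`. -/
def sball {k : ℕ} (x : ℕ → Fin k) (ε : ℝ) : Set (ℕ → Fin k) := {y | shiftDist x y < ε}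

/-- `N(x, U) = {n ≥ 1 : σ^n(x) ∈ U}`. -/
def visits {k : ℕ} (x : ℕ → Fin k) (U : Set (ℕ → Fin k)) : Set ℕ :=
  {n | 1 ≤ n ∧ shift^[n] x ∈ U}

/-- A point is recurrent if `N(x, B_ε(x)) ≠ ∅` for every `ε > 0`. -/
def Recurrent {k : ℕ} (x : ℕ → Fin k) : Prop := ∀ ε > (0 : ℝ), (visits x (sball x ε)).Nonempty

/-- A point is Banach recurrent if `N(x, B_ε(x))` has positive Banach upper density
for every `ε > 0`. -/
def BanachRecurrent {k : ℕ} (x : ℕ → Fin k) : Prop :=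
  ∀ ε > (0 : ℝ), 0 < banachUpperDensity (visits x (sball x ε))

/-- Statistical ω-limit set w.r.t. a density notion `ξ`:
`ω_ξ(x) = {y : ξ(N(x, B_ε(y))) > 0 for all ε > 0}`. -/
def statOmega {k : ℕ} (ξ : Set ℕ → ℝ) (x : ℕ → Fin k) : Set (ℕ → Fin k) :=
  {y | ∀ ε > (0 : ℝ), 0 < ξ (visits x (sball y ε))}

/-- The usual ω-limit set of `x` under the shift. -/
def omegaLim {k : ℕ} (x : ℕ → Fin k) : Set (ℕ → Fin k) :=
  {y | ∀ ε > (0 : ℝ), ∀ N : ℕ, ∃ n ≥ N, shift^[n] x ∈ sball y ε}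

/-- Density of a subset of `Σ_k` w.r.t. the metric `shiftDist`. -/
def ShiftDense {k : ℕ} (A : Set (ℕ → Fin k)) : Prop :=
  ∀ x : ℕ → Fin k, ∀ ε > (0 : ℝ), ∃ y ∈ A, shiftDist x y < ε

/-- Closure of a subset of `Σ_k` w.r.t. the metric `shiftDist`. -/
def shiftClosure {k : ℕ} (A : Set (ℕ → Fin k)) : Set (ℕ → Fin k) :=
  {z | ∀ ε > (0 : ℝ), ∃ y ∈ A, shiftDist z y < ε}

/-- `Φ^{(n)}_{xy}(t)`: the proportion of times `0 ≤ i < n` with `d(σ^i x, σ^i y) < t`. -/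
noncomputable def PhiN {k : ℕ} (x y : ℕ → Fin k) (n : ℕ) (t : ℝ) : ℝ :=
  (({i | i < n ∧ shiftDist (shift^[i] x) (shift^[i] y) < t}).ncard : ℝ) / n

/-- A pair is DC1 (distributionally chaotic of type 1) if `Φ_{xy}(s) = 0` for some `s > 0`
and `Φ*_{xy}(t) = 1` for all `t > 0`. -/
def DC1Pair {k : ℕ} (x y : ℕ → Fin k) : Prop :=
  (∃ s > (0 : ℝ), Filter.liminf (fun n => PhiN x y n s) Filter.atTop = 0) ∧
  (∀ t > (0 : ℝ), Filter.limsup (fun n => PhiN x y n t) Filter.atTop = 1)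

/-- A set with at least two points is DC1-scrambled if every pair of distinct points is DC1. -/
def DC1Scrambled {k : ℕ} (S : Set (ℕ → Fin k)) : Prop :=
  S.Nontrivial ∧ ∀ x ∈ S, ∀ y ∈ S, x ≠ y → DC1Pair x y

/-- `strictOrEq true A B` means `A ⊊ B`; `strictOrEq false A B` means `A = B`. -/
def strictOrEq {α : Type*} (b : Bool) (A B : Set α) : Prop := if b then A ⊂ B else A = B

/-- The patterns of (strict ⊊ = `true` / equality = `false`) for the three inclusions
`ω_{B_*} ⊆ ω_{d̲} ⊆ ω_{d̄} ⊆ ω_{B*}` in Cases (1)–(6). -/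
def caseFlags : Fin 6 → Bool × Bool × Bool :=
  ![(true, false, false), (true, false, true), (false, true, false),
    (true, true, false), (false, true, true), (true, true, true)]

/-- `x` satisfies Case (i), i = 1,…,6: the chain
`ω_{B_*}(x) ⊆ ω_{d̲}(x) ⊆ ω_{d̄}(x) ⊆ ω_{B*}(x) = ω_σ(x)` with strictness pattern given by
`caseFlags i`, and the last inclusion an equality. -/
def SatCase {k : ℕ} (i : Fin 6) (x : ℕ → Fin k) : Prop :=
  strictOrEq (caseFlags i).1 (statOmega banachLowerDensity x) (statOmega lowerDensity x) ∧
  strictOrEq (caseFlags i).2.1 (statOmega lowerDensity x) (statOmega upperDensity x) ∧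
  strictOrEq (caseFlags i).2.2 (statOmega upperDensity x) (statOmega banachUpperDensity x) ∧
  statOmega banachUpperDensity x = omegaLim x

/-- `x` satisfies Case (i'), i = 1,…,6: as in Case (i) but the last inclusion
`ω_{B*}(x) ⊆ ω_σ(x)` is strict. -/
def SatCase' {k : ℕ} (i : Fin 6) (x : ℕ → Fin k) : Prop :=
  strictOrEq (caseFlags i).1 (statOmega banachLowerDensity x) (statOmega lowerDensity x) ∧
  strictOrEq (caseFlags i).2.1 (statOmega lowerDensity x) (statOmega upperDensity x) ∧
  strictOrEq (caseFlags i).2.2 (statOmega upperDensity x) (statOmega banachUpperDensity x) ∧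
  statOmega banachUpperDensity x ⊂ omegaLim x
/-- A subshift: a nonempty, closed (w.r.t. the metric `shiftDist`), shift-invariant subset. -/
def IsSubshift {k : ℕ} (P : Set (ℕ → Fin k)) : Prop :=
  P.Nonempty ∧ shiftClosure P ⊆ P ∧ ∀ x ∈ P, shift x ∈ P

/-- The first `n` symbols of `y` as a finite word. -/
def prefixWord {k : ℕ} (y : ℕ → Fin k) (n : ℕ) : List (Fin k) :=
  List.ofFn (fun i : Fin n => y i)

/-- A finite word occurs in (the language of) `P` if it is the initial word of
some point of `P`. -/
def IsWordIn {k : ℕ} (w : List (Fin k)) (P : Set (ℕ → Fin k)) : Prop :=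
  ∃ x ∈ P, ∀ i : Fin w.length, x i = w.get i

/-- Data for the construction of the map `T`: an enumeration `C` of all (nonempty) finite
words of the subshift `P`, and a nonempty finite word `A1` not occurring in `P`. -/
structure TData (k : ℕ) (P : Set (ℕ → Fin k)) where
  C : ℕ → List (Fin k)
  A1 : List (Fin k)
  A1_ne : A1 ≠ []
  A1_not : ¬ IsWordIn A1 P
  C_in : ∀ n, IsWordIn (C n) P
  C_surj : ∀ w : List (Fin k), w ≠ [] → IsWordIn w P → ∃ n, C n = w

/-- The words `A_n` of the construction (indexed from `0`, so `TData.A y 0` is the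
paper's `A_1`): `A_{n+1} = A_n B_n A_n`, where `B_n = C_n Y_n ⋯ Y_n` consists of the
word `C_n` followed by `|A_n|²` copies of the initial word `Y_n` of `y` (paper's `Y_n`,
of length `n`, is `prefixWord y (n+1)` in our `0`-based indexing). -/
def TData.A {k : ℕ} {P : Set (ℕ → Fin k)} (D : TData k P) (y : ℕ → Fin k) :
    ℕ → List (Fin k)
  | 0 => D.A1
  | n + 1 =>
      D.A y n ++
        (D.C n ++ (List.replicate ((D.A y n).length ^ 2) (prefixWord y (n + 1))).flatten) ++
        D.A y n

/-- The requirement `|C_n| = o(|A_n|)` as `n → ∞`. -/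
def TData.Small {k : ℕ} {P : Set (ℕ → Fin k)} (D : TData k P) : Prop :=
  ∀ y : ℕ → Fin k,
    Filter.Tendsto (fun n => ((D.C n).length : ℝ) / ((D.A y n).length))
      Filter.atTop (nhds 0)

/-- The map `T`: `T(y) = lim_n A_n` is the sequence whose `i`-th symbol is the `i`-th
symbol of `A_n` for every large `n` (the words `A_n` are nested prefixes of each other,
and `|A_{i+1}| > i`, so the `i`-th symbol of `A_{i+1}` is well defined). -/
def TData.T {k : ℕ} {P : Set (ℕ → Fin k)} (D : TData k P) (y : ℕ → Fin k) : ℕ → Fin k :=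
  fun i => if h : i < (D.A y (i + 1)).length then (D.A y (i + 1)).get ⟨i, h⟩ else y i
/-- The subshift of finite type `Π_L ⊆ Σ_k`: sequences in which no `L` consecutive
symbols are all equal. -/
def PiL (k L : ℕ) : Set (ℕ → Fin k) :=
  {x | ∀ i : ℕ, ∃ j₁ j₂ : ℕ, j₁ < L ∧ j₂ < L ∧ x (i + j₁) ≠ x (i + j₂)}

/-- The Birkhoff average `(1/n) Σ_{i<n} φ(σ^i x)`. -/
noncomputable def birkhoffAvg {k : ℕ} (φ : (ℕ → Fin k) → ℝ) (x : ℕ → Fin k) (n : ℕ) : ℝ :=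
  (∑ i ∈ Finset.range n, φ (shift^[i] x)) / n

private lemma shift_iter {k : ℕ} (x : ℕ → Fin k) (i j : ℕ) : shift^[i] x j = x (j + i) := by
  induction i generalizing x j with
  | zero => rfl
  | succ i ih =>
      rw [Function.iterate_succ_apply, ih]
      simp [shift]; ring_nf

private lemma ucont {k : ℕ} (φ : (ℕ → Fin k) → ℝ) (hφ : Continuous φ) {ε : ℝ} (hε : 0 < ε) :
    ∃ m : ℕ, ∀ u v : ℕ → Fin k, (∀ i < m, u i = v i) → |φ u - φ v| ≤ ε := by
  have h1 : ∀ x : ℕ → Fin k, ∃ mx : ℕ, ∀ g : ℕ → Fin k,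
      (∀ i < mx, g i = x i) → |φ g - φ x| < ε / 2 := by
    intro x
    have hs : IsOpen (φ ⁻¹' (Metric.ball (φ x) (ε / 2))) := hφ.isOpen_preimage _ Metric.isOpen_ball
    have hx : x ∈ φ ⁻¹' (Metric.ball (φ x) (ε / 2)) := by
      simp [Metric.mem_ball, hε, half_pos hε]
    obtain ⟨I, u, hu, hsub⟩ := isOpen_pi_iff.mp hs x hx
    refine ⟨I.sup id + 1, fun g hg => ?_⟩
    have : g ∈ (I : Set ℕ).pi u := by
      intro i hi
      have : g i = x i := hg i (Nat.lt_succ_of_le (Finset.le_sup (f := id) hi))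
      rw [this]; exact (hu i hi).2
    have := hsub this
    simpa [Real.dist_eq] using this
  choose mf hmf using h1
  have hcov : (Set.univ : Set (ℕ → Fin k)) ⊆ ⋃ x : ℕ → Fin k, {g | ∀ i < mf x, g i = x i} := by
    intro g _
    exact Set.mem_iUnion.2 ⟨g, fun i _ => rfl⟩
  have hopen : ∀ x : ℕ → Fin k, IsOpen {g : ℕ → Fin k | ∀ i < mf x, g i = x i} := by
    intro x
    have : {g : ℕ → Fin k | ∀ i < mf x, g i = x i} =
        ⋂ i ∈ Finset.range (mf x), (fun g : ℕ → Fin k => g i) ⁻¹' {x i} := by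
      ext g; simp
    rw [this]
    exact isOpen_biInter_finset fun i _ => (continuous_apply i).isOpen_preimage _ (isOpen_discrete _)
  obtain ⟨t, ht⟩ := isCompact_univ.elim_finite_subcover _ hopen hcov
  refine ⟨t.sup mf, fun u v huv => ?_⟩
  obtain ⟨x, hxt, hux⟩ := Set.mem_iUnion₂.1 (ht (Set.mem_univ u))
  have hvx : ∀ i < mf x, v i = x i := fun i hi => by
    rw [← huv i (lt_of_lt_of_le hi (Finset.le_sup hxt))]; exact hux i hi
  have h1 := hmf x u hux
  have h2 := hmf x v hvx
  calc |φ u - φ v| ≤ |φ u - φ x| + |φ x - φ v| := abs_sub_le _ _ _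
    _ ≤ ε := by
        have h2' : |φ x - φ v| < ε / 2 := by rw [abs_sub_comm]; exact h2
        linarith

private lemma window_sum {k : ℕ} (φ : (ℕ → Fin k) → ℝ) (M ε : ℝ) (m : ℕ)
    (hM : ∀ u, |φ u| ≤ M) (hM0 : 0 ≤ M) (hε : 0 ≤ ε)
    (hm : ∀ u v : ℕ → Fin k, (∀ i < m, u i = v i) → |φ u - φ v| ≤ ε)
    (z z' : ℕ → Fin k) (p q ℓ : ℕ) (hag : ∀ j < ℓ, z (p + j) = z' (q + j)) :
    |∑ i ∈ Finset.range ℓ, φ (shift^[p + i] z) - ∑ i ∈ Finset.range ℓ, φ (shift^[q + i] z')| ≤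
      ε * ℓ + 2 * M * m := by
  rw [← Finset.sum_sub_distrib]
  calc |∑ i ∈ Finset.range ℓ, (φ (shift^[p + i] z) - φ (shift^[q + i] z'))|
      ≤ ∑ i ∈ Finset.range ℓ, |φ (shift^[p + i] z) - φ (shift^[q + i] z')| :=
        Finset.abs_sum_le_sum_abs _ _
    _ ≤ ∑ i ∈ Finset.range ℓ, (ε + if ℓ ≤ i + m then 2 * M else 0) := by
        apply Finset.sum_le_sum
        intro i hi
        by_cases h : i + m ≤ ℓ
        · have hterm : |φ (shift^[p + i] z) - φ (shift^[q + i] z')| ≤ ε := by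
            apply hm
            intro j hj
            rw [shift_iter, shift_iter]
            have h1 : j + (p + i) = p + (i + j) := by ring
            have h2 : j + (q + i) = q + (i + j) := by ring
            rw [h1, h2]
            exact hag (i + j) (by omega)
          have hite : (0:ℝ) ≤ if ℓ ≤ i + m then 2 * M else 0 := by positivity
          linarith
        · have : |φ (shift^[p + i] z) - φ (shift^[q + i] z')| ≤ 2 * M := by
            calc _ ≤ |φ (shift^[p + i] z)| + |φ (shift^[q + i] z')| := abs_sub _ _
              _ ≤ 2 * M := by linarith [hM (shift^[p + i] z), hM (shift^[q + i] z')]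
          rw [if_pos (by omega)]
          linarith
    _ ≤ ε * ℓ + 2 * M * m := by
        rw [Finset.sum_add_distrib, Finset.sum_const, Finset.card_range]
        have : ∑ i ∈ Finset.range ℓ, (if ℓ ≤ i + m then 2 * M else 0) ≤ 2 * M * m := by
          have hc : ((Finset.range ℓ).filter (fun i => ℓ ≤ i + m)).card ≤ m := by
            calc ((Finset.range ℓ).filter (fun i => ℓ ≤ i + m)).card
                ≤ (Finset.Ico (ℓ - m) ℓ).card := by
                  apply Finset.card_le_card
                  intro i hi
                  simp only [Finset.mem_filter, Finset.mem_range] at hi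
                  simp only [Finset.mem_Ico]
                  omega
              _ ≤ m := by rw [Nat.card_Ico]; omega
          calc ∑ i ∈ Finset.range ℓ, (if ℓ ≤ i + m then 2 * M else 0)
              = ∑ i ∈ (Finset.range ℓ).filter (fun i => ℓ ≤ i + m), 2 * M :=
                (Finset.sum_filter _ _).symm
            _ = ((Finset.range ℓ).filter (fun i => ℓ ≤ i + m)).card * (2 * M) := by
                rw [Finset.sum_const, nsmul_eq_mul]
            _ ≤ (m : ℝ) * (2 * M) := by
                apply mul_le_mul_of_nonneg_right _ (by positivity)
                exact_mod_cast hc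
            _ = 2 * M * m := by ring
        push_cast
        rw [nsmul_eq_mul]
        linarith



section Structural

variable {k : ℕ} {P : Set (ℕ → Fin k)} (D : TData k P) (y : ℕ → Fin k)

private lemma plen (n : ℕ) : (prefixWord y n).length = n := by simp [prefixWord]

private lemma A_succ (n : ℕ) :
    D.A y (n + 1) =
      (D.A y n ++ (D.C n ++ (List.replicate ((D.A y n).length ^ 2) (prefixWord y (n + 1))).flatten))
        ++ D.A y n := by
  rfl

private lemma flat_len (n r : ℕ) :
    ((List.replicate r (prefixWord y (n + 1))).flatten).length = r * (n + 1) := by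
  simp [List.length_flatten, List.map_replicate, prefixWord]

private lemma mid_len (n : ℕ) :
    (D.A y n ++ (D.C n ++ (List.replicate ((D.A y n).length ^ 2) (prefixWord y (n + 1))).flatten)).length
      = (D.A y n).length + ((D.C n).length + (D.A y n).length ^ 2 * (n + 1)) := by
  simp only [List.length_append, flat_len]

private lemma A_len (n : ℕ) :
    (D.A y (n + 1)).length =
      (D.A y n).length + ((D.C n).length + (D.A y n).length ^ 2 * (n + 1)) + (D.A y n).length := by
  rw [A_succ, List.length_append, mid_len]

private lemma A_pos (n : ℕ) : 0 < (D.A y n).length := by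
  induction n with
  | zero => exact List.length_pos_iff.2 D.A1_ne
  | succ n ih => rw [A_len]; omega

private lemma sq_ge (n : ℕ) : (D.A y n).length ≤ (D.A y n).length ^ 2 * (n + 1) := by
  have h1 := A_pos D y n
  nlinarith

private lemma A_ge (n : ℕ) : n + 1 ≤ (D.A y n).length := by
  induction n with
  | zero => exact A_pos D y 0
  | succ n ih =>
      have h1 := A_len D y n
      have h2 : 1 ≤ (D.A y n).length ^ 2 * (n + 1) := by
        have h3 := A_pos D y n
        have h4 : 1 ≤ (D.A y n).length ^ 2 := Nat.one_le_pow _ _ h3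
        nlinarith
      omega

private lemma A_prefix (n : ℕ) : D.A y n <+: D.A y (n + 1) := by
  rw [A_succ, List.append_assoc]
  exact List.prefix_append _ _

private lemma A_prefix_le {n nn : ℕ} (h : n ≤ nn) : D.A y n <+: D.A y nn := by
  induction nn with
  | zero => rw [Nat.le_zero.1 h]
  | succ nn ih =>
      rcases Nat.lt_or_ge n (nn + 1) with h' | h'
      · exact (ih (by omega)).trans (A_prefix D y nn)
      · rw [Nat.le_antisymm h h']

private lemma T_get (n i : ℕ) (h : i < (D.A y n).length) :
    D.T y i = (D.A y n)[i] := by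
  have hi : i < (D.A y (i + 1)).length := by
    have := A_ge D y (i + 1); omega
  have hx : D.T y i = (D.A y (i + 1))[i] := by
    simp only [TData.T, dif_pos hi]
    rfl
  rw [hx]
  rcases Nat.le_total n (i + 1) with hle | hle
  · exact ((A_prefix_le D y hle).getElem h).symm
  · exact (A_prefix_le D y hle).getElem hi

private lemma rep_get {α : Type*} (w : List α) (hw : 0 < w.length) (r j : ℕ)
    (h : j < ((List.replicate r w).flatten).length) :
    ((List.replicate r w).flatten)[j] = w[j % w.length]'(Nat.mod_lt _ hw) := by
  induction r generalizing j with
  | zero => simp at h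
  | succ r ih =>
      have hflat : (List.replicate (r + 1) w).flatten = w ++ (List.replicate r w).flatten := by
        rw [List.replicate_succ, List.flatten_cons]
      have hlen' : ((List.replicate (r + 1) w).flatten).length
          = w.length + ((List.replicate r w).flatten).length := by
        rw [hflat, List.length_append]
      rcases Nat.lt_or_ge j w.length with hj | hj
      · rw [List.getElem_of_eq hflat, List.getElem_append_left hj]
        congr 1
        exact (Nat.mod_eq_of_lt hj).symm
      · have hlen2 : j - w.length < ((List.replicate r w).flatten).length := by omega
        rw [List.getElem_of_eq hflat, List.getElem_append_right hj, ih _ hlen2]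
        congr 1
        rw [Nat.mod_eq_sub_mod hj]

private lemma T_Y (n j : ℕ) (hj : j < (D.A y n).length ^ 2 * (n + 1)) :
    D.T y ((D.A y n).length + (D.C n).length + j) = y (j % (n + 1)) := by
  have hml := mid_len D y n
  have hal := A_len D y n
  have hlen1 : (D.A y n).length + (D.C n).length + j < (D.A y (n + 1)).length := by omega
  rw [T_get D y (n + 1) _ hlen1, List.getElem_of_eq (A_succ D y n)]
  have h1 : (D.A y n).length + (D.C n).length + j <
      (D.A y n ++ (D.C n ++ (List.replicate ((D.A y n).length ^ 2) (prefixWord y (n + 1))).flatten)).length := by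
    omega
  rw [List.getElem_append_left h1]
  have hge : (D.A y n).length ≤ (D.A y n).length + (D.C n).length + j := by omega
  rw [List.getElem_append_right hge]
  have hge2 : (D.C n).length ≤ (D.A y n).length + (D.C n).length + j - (D.A y n).length := by omega
  rw [List.getElem_append_right hge2]
  have hfl := flat_len y n ((D.A y n).length ^ 2)
  have hpl : 0 < (prefixWord y (n + 1)).length := by rw [plen]; omega
  rw [rep_get _ hpl]
  have hofn : ∀ (i : ℕ) (h : i < (prefixWord y (n + 1)).length), (prefixWord y (n + 1))[i] = y i := by
      intro i h
      have h' : i < n + 1 := by rwa [plen] at h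
      simp only [prefixWord, List.getElem_ofFn]
  rw [hofn]
  congr 1
  rw [plen]
  congr 1
  omega

private lemma T_tail (n j : ℕ) (hj : j < (D.A y n).length) :
    D.T y ((D.A y n).length + (D.C n).length + (D.A y n).length ^ 2 * (n + 1) + j) = D.T y j := by
  have hml := mid_len D y n
  have hal := A_len D y n
  have hlen1 : (D.A y n).length + (D.C n).length + (D.A y n).length ^ 2 * (n + 1) + j
      < (D.A y (n + 1)).length := by omega
  rw [T_get D y (n + 1) _ hlen1, List.getElem_of_eq (A_succ D y n)]
  have hge : (D.A y n ++ (D.C n ++ (List.replicate ((D.A y n).length ^ 2) (prefixWord y (n + 1))).flatten)).length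
      ≤ (D.A y n).length + (D.C n).length + (D.A y n).length ^ 2 * (n + 1) + j := by
    omega
  rw [List.getElem_append_right hge]
  rw [← T_get D y n]
  congr 1
  omega

end Structural



private lemma abs_add5 (x1 x2 x3 x4 x5 : ℝ) :
    |x1 + (x2 + (x3 + (x4 + x5)))| ≤ |x1| + |x2| + |x3| + |x4| + |x5| := by
  have h1 := abs_add_le x4 x5
  have h2 := abs_add_le x3 (x4 + x5)
  have h3 := abs_add_le x2 (x3 + (x4 + x5))
  have h4 := abs_add_le x1 (x2 + (x3 + (x4 + x5)))
  linarith

section Analytic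

variable {k : ℕ} {P : Set (ℕ → Fin k)} (D : TData k P) (y : ℕ → Fin k)
variable (φ : (ℕ → Fin k) → ℝ) (M : ℝ)

private lemma sum_split : ∀ (z : ℕ → Fin k) (p ℓ : ℕ),
    ∑ i ∈ Finset.range (p + ℓ), φ (shift^[i] z)
      = ∑ i ∈ Finset.range p, φ (shift^[i] z) + ∑ i ∈ Finset.range ℓ, φ (shift^[p + i] z) := by
  intro z p ℓ
  exact Finset.sum_range_add _ p ℓ

private lemma sum_split2 : ∀ (z : ℕ → Fin k) (p q ℓ : ℕ),
    ∑ i ∈ Finset.range (q + ℓ), φ (shift^[p + i] z)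
      = ∑ i ∈ Finset.range q, φ (shift^[p + i] z)
        + ∑ i ∈ Finset.range ℓ, φ (shift^[(p + q) + i] z) := by
  intro z p q ℓ
  rw [Finset.sum_range_add]
  congr 1
  apply Finset.sum_congr rfl
  intro i _
  have : p + (q + i) = (p + q) + i := by omega
  rw [this]

private lemma sum_crude (hM : ∀ u, |φ u| ≤ M) : ∀ (z : ℕ → Fin k) (p ℓ : ℕ),
    |∑ i ∈ Finset.range ℓ, φ (shift^[p + i] z)| ≤ M * ℓ := by
  intro z p ℓ
  calc |∑ i ∈ Finset.range ℓ, φ (shift^[p + i] z)|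
      ≤ ∑ i ∈ Finset.range ℓ, |φ (shift^[p + i] z)| := Finset.abs_sum_le_sum_abs _ _
    _ ≤ ∑ _i ∈ Finset.range ℓ, M := Finset.sum_le_sum fun i _ => hM _
    _ = M * ℓ := by rw [Finset.sum_const, Finset.card_range, nsmul_eq_mul, mul_comm]

private lemma sum_crude0 (hM : ∀ u, |φ u| ≤ M) : ∀ (z : ℕ → Fin k) (ℓ : ℕ),
    |∑ i ∈ Finset.range ℓ, φ (shift^[i] z)| ≤ M * ℓ := by
  intro z ℓ
  have := sum_crude φ M hM z 0 ℓ
  simpa using this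

private lemma seg_blocks (hM0 : 0 ≤ M) (hM : ∀ u, |φ u| ≤ M) :
    ∀ (ε : ℝ), 0 ≤ ε → ∀ (m : ℕ),
      (∀ u v : ℕ → Fin k, (∀ i < m, u i = v i) → |φ u - φ v| ≤ ε) →
      ∀ n b, b ≤ (D.A y n).length ^ 2 →
      |∑ i ∈ Finset.range (b * (n + 1)),
          φ (shift^[((D.A y n).length + (D.C n).length) + i] (D.T y))
        - b * ∑ i ∈ Finset.range (n + 1), φ (shift^[i] y)|
        ≤ b * (ε * (n + 1) + 2 * M * m) := by
  intro ε hε m hm n b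
  induction b with
  | zero => simp
  | succ b ih =>
      intro hb
      have hih := ih (by omega)
      have hsp : (b + 1) * (n + 1) = b * (n + 1) + (n + 1) := by ring
      rw [hsp, Finset.sum_range_add]
      have hagree : ∀ j < n + 1,
          D.T y (((D.A y n).length + (D.C n).length + b * (n + 1)) + j) = y (0 + j) := by
        intro j hj
        have hidx : ((D.A y n).length + (D.C n).length + b * (n + 1)) + j
            = (D.A y n).length + (D.C n).length + (b * (n + 1) + j) := by omega
        have hmod : (b * (n + 1) + j) % (n + 1) = j := by
          rw [mul_comm, Nat.mul_add_mod, Nat.mod_eq_of_lt hj]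
        rw [hidx, T_Y D y n (b * (n + 1) + j) (by nlinarith), hmod, Nat.zero_add]
      have hwin := window_sum φ M ε m hM hM0 hε hm (D.T y) y
        ((D.A y n).length + (D.C n).length + b * (n + 1)) 0 (n + 1) hagree
      simp only [Nat.zero_add] at hwin
      have hcong : ∀ i ∈ Finset.range (n + 1),
          φ (shift^[((D.A y n).length + (D.C n).length) + (b * (n + 1) + i)] (D.T y))
            = φ (shift^[((D.A y n).length + (D.C n).length + b * (n + 1)) + i] (D.T y)) := by
        intro i _
        have : ((D.A y n).length + (D.C n).length) + (b * (n + 1) + i)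
            = ((D.A y n).length + (D.C n).length + b * (n + 1)) + i := by omega
        rw [this]
      rw [Finset.sum_congr rfl hcong]
      have heq : ∑ i ∈ Finset.range (b * (n + 1)),
            φ (shift^[((D.A y n).length + (D.C n).length) + i] (D.T y))
          + ∑ i ∈ Finset.range (n + 1),
            φ (shift^[((D.A y n).length + (D.C n).length + b * (n + 1)) + i] (D.T y))
          - (↑(b + 1)) * ∑ i ∈ Finset.range (n + 1), φ (shift^[i] y)
          = (∑ i ∈ Finset.range (b * (n + 1)),
              φ (shift^[((D.A y n).length + (D.C n).length) + i] (D.T y))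
            - b * ∑ i ∈ Finset.range (n + 1), φ (shift^[i] y))
          + (∑ i ∈ Finset.range (n + 1),
              φ (shift^[((D.A y n).length + (D.C n).length + b * (n + 1)) + i] (D.T y))
            - ∑ i ∈ Finset.range (n + 1), φ (shift^[i] y)) := by
        push_cast
        ring
      rw [heq]
      have htri := abs_add_le (∑ i ∈ Finset.range (b * (n + 1)),
            φ (shift^[((D.A y n).length + (D.C n).length) + i] (D.T y))
          - b * ∑ i ∈ Finset.range (n + 1), φ (shift^[i] y))
        (∑ i ∈ Finset.range (n + 1),
            φ (shift^[((D.A y n).length + (D.C n).length + b * (n + 1)) + i] (D.T y))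
          - ∑ i ∈ Finset.range (n + 1), φ (shift^[i] y))
      have hfin : (↑(b + 1) : ℝ) * (ε * (n + 1) + 2 * M * m)
          = b * (ε * (n + 1) + 2 * M * m) + (ε * (n + 1) + 2 * M * m) := by
        push_cast
        ring
      rw [hfin]
      have hwin' : |∑ i ∈ Finset.range (n + 1),
            φ (shift^[((D.A y n).length + (D.C n).length + b * (n + 1)) + i] (D.T y))
          - ∑ i ∈ Finset.range (n + 1), φ (shift^[i] y)| ≤ ε * (↑(n + 1)) + 2 * M * m := hwin
      push_cast at hwin' ⊢
      linarith

private lemma seg_partial (hM0 : 0 ≤ M) (hM : ∀ u, |φ u| ≤ M) :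
    ∀ (ε : ℝ), 0 ≤ ε → ∀ (m : ℕ),
      (∀ u v : ℕ → Fin k, (∀ i < m, u i = v i) → |φ u - φ v| ≤ ε) →
      ∀ n b s, b * (n + 1) + s ≤ (D.A y n).length ^ 2 * (n + 1) → s ≤ n + 1 →
      |∑ i ∈ Finset.range s,
          φ (shift^[((D.A y n).length + (D.C n).length + b * (n + 1)) + i] (D.T y))
        - ∑ i ∈ Finset.range s, φ (shift^[i] y)|
        ≤ ε * s + 2 * M * m := by
  intro ε hε m hm n b s hbs hs
  have hagree : ∀ j < s,
      D.T y (((D.A y n).length + (D.C n).length + b * (n + 1)) + j) = y (0 + j) := by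
    intro j hj
    have hidx : ((D.A y n).length + (D.C n).length + b * (n + 1)) + j
        = (D.A y n).length + (D.C n).length + (b * (n + 1) + j) := by omega
    have hlt : b * (n + 1) + j < (D.A y n).length ^ 2 * (n + 1) := by omega
    have hmod : (b * (n + 1) + j) % (n + 1) = j := by
      rw [mul_comm, Nat.mul_add_mod, Nat.mod_eq_of_lt (by omega)]
    rw [hidx, T_Y D y n (b * (n + 1) + j) hlt, hmod, Nat.zero_add]
  have hwin := window_sum φ M ε m hM hM0 hε hm (D.T y) y
    ((D.A y n).length + (D.C n).length + b * (n + 1)) 0 s hagree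
  simpa using hwin

private lemma seg_tail (hM0 : 0 ≤ M) (hM : ∀ u, |φ u| ≤ M) :
    ∀ (ε : ℝ), 0 ≤ ε → ∀ (m : ℕ),
      (∀ u v : ℕ → Fin k, (∀ i < m, u i = v i) → |φ u - φ v| ≤ ε) →
      ∀ n t, t ≤ (D.A y n).length →
      |∑ i ∈ Finset.range t,
          φ (shift^[((D.A y n).length + (D.C n).length + (D.A y n).length ^ 2 * (n + 1)) + i] (D.T y))
        - ∑ i ∈ Finset.range t, φ (shift^[i] (D.T y))|
        ≤ ε * t + 2 * M * m := by
  intro ε hε m hm n t ht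
  have hagree : ∀ j < t,
      D.T y (((D.A y n).length + (D.C n).length + (D.A y n).length ^ 2 * (n + 1)) + j)
        = D.T y (0 + j) := by
    intro j hj
    rw [T_tail D y n j (by omega), Nat.zero_add]
  have hwin := window_sum φ M ε m hM hM0 hε hm (D.T y) (D.T y)
    ((D.A y n).length + (D.C n).length + (D.A y n).length ^ 2 * (n + 1)) 0 t hagree
  simpa using hwin

set_option maxHeartbeats 1000000 in
private lemma end_est (hM0 : 0 ≤ M) (hM : ∀ u, |φ u| ≤ M) (hφ : Continuous φ)
    (hDy : Filter.Tendsto (fun n => ((D.C n).length : ℝ) / ((D.A y n).length))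
      Filter.atTop (nhds 0)) :
    Filter.Tendsto
      (fun n => birkhoffAvg φ (D.T y)
          ((D.A y n).length + (D.C n).length + (D.A y n).length ^ 2 * (n + 1))
        - birkhoffAvg φ y (n + 1)) Filter.atTop (nhds 0) := by
  have anpos : ∀ n, 0 < (D.A y n).length := A_pos D y
  have ange : ∀ n, n + 1 ≤ (D.A y n).length := A_ge D y
  have anmono : ∀ {n nn : ℕ}, n ≤ nn → (D.A y n).length ≤ (D.A y nn).length :=
    fun h => (A_prefix_le D y h).length_le
  have alen : ∀ n, (D.A y (n + 1)).length =
      (D.A y n).length + ((D.C n).length + (D.A y n).length ^ 2 * (n + 1)) + (D.A y n).length :=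
    A_len D y
  have hsplit := sum_split (φ := φ) (k := k)
  have hsplit2 := sum_split2 (φ := φ) (k := k)
  have hcrude := sum_crude φ M hM
  have hcrude0 := sum_crude0 φ M hM
  have hblocks := seg_blocks D y φ M hM0 hM
  have hpartial := seg_partial D y φ M hM0 hM
  have htail := seg_tail D y φ M hM0 hM
  rw [Metric.tendsto_atTop]
  intro εf hεf
  have hε : 0 < εf / 4 := by linarith
  obtain ⟨m, hm⟩ := ucont φ hφ hε
  obtain ⟨N₂, hN₂⟩ := Metric.tendsto_atTop.1 (hDy) 1 one_pos
  obtain ⟨N₃, hN₃⟩ := exists_nat_gt ((2 * M * m + 4 * M) / (εf / 4))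
  refine ⟨max N₂ N₃, fun n hn => ?_⟩
  have hcn : ((D.C n).length : ℝ) ≤ ((D.A y n).length : ℝ) := by
    have h := hN₂ n (le_trans (le_max_left _ _) hn)
    rw [Real.dist_eq, sub_zero] at h
    have hap : (0:ℝ) < ((D.A y n).length : ℝ) := by exact_mod_cast anpos n
    have := abs_lt.1 h
    have h2 : ((D.C n).length : ℝ) / ((D.A y n).length : ℝ) < 1 := this.2
    calc ((D.C n).length : ℝ) = ((D.C n).length : ℝ) / ((D.A y n).length : ℝ)
          * ((D.A y n).length : ℝ) := by field_simp
      _ ≤ 1 * ((D.A y n).length : ℝ) := by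
          apply mul_le_mul_of_nonneg_right h2.le hap.le
      _ = ((D.A y n).length : ℝ) := one_mul _
  have hmn : 2 * M * m + 4 * M < εf / 4 * (n + 1) := by
    have h1 : (2 * M * m + 4 * M) / (εf / 4) < N₃ := hN₃
    have h2 : (N₃ : ℝ) ≤ n := by
      exact_mod_cast le_trans (le_max_right N₂ N₃) hn
    rw [div_lt_iff₀ hε] at h1
    nlinarith
  -- notation
  have hEnat : (D.A y n).length + (D.C n).length + (D.A y n).length ^ 2 * (n + 1)
      = ((D.A y n).length + (D.C n).length) + (D.A y n).length ^ 2 * (n + 1) := by omega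
  have hdecomp := hsplit (D.T y) ((D.A y n).length + (D.C n).length)
    ((D.A y n).length ^ 2 * (n + 1))
  have hTY := hblocks (εf / 4) hε.le m hm n ((D.A y n).length ^ 2) le_rfl
  have hS1 := hcrude0 (D.T y) ((D.A y n).length + (D.C n).length)
  have hSy := hcrude0 y (n + 1)
  set S1 : ℝ := ∑ i ∈ Finset.range ((D.A y n).length + (D.C n).length),
    φ (shift^[i] (D.T y)) with hS1d
  set TY : ℝ := ∑ i ∈ Finset.range ((D.A y n).length ^ 2 * (n + 1)),
    φ (shift^[((D.A y n).length + (D.C n).length) + i] (D.T y)) with hTYd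
  set Sy : ℝ := ∑ i ∈ Finset.range (n + 1), φ (shift^[i] y) with hSyd
  set SxE : ℝ := ∑ i ∈ Finset.range
    ((D.A y n).length + (D.C n).length + (D.A y n).length ^ 2 * (n + 1)),
    φ (shift^[i] (D.T y)) with hSxEd
  have hdec2 : SxE = S1 + TY := by
    rw [hSxEd, hS1d, hTYd, ← hdecomp, hEnat]
  have hn1 : (0:ℝ) < (n:ℝ) + 1 := by positivity
  have hEdef : (((D.A y n).length + (D.C n).length + (D.A y n).length ^ 2 * (n + 1) : ℕ) : ℝ)
      = ((D.A y n).length : ℝ) + ((D.C n).length : ℝ)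
        + ((D.A y n).length : ℝ) ^ 2 * ((n : ℝ) + 1) := by push_cast; ring
  set E : ℝ := (((D.A y n).length + (D.C n).length + (D.A y n).length ^ 2 * (n + 1) : ℕ) : ℝ)
    with hEd
  have hEpos : (0:ℝ) < E := by
    rw [hEd]
    have := anpos n
    have : 0 < (D.A y n).length + (D.C n).length + (D.A y n).length ^ 2 * (n + 1) := by omega
    exact_mod_cast this
  have g1 : ((D.A y n).length : ℝ) ^ 2 * ((n:ℝ) + 1) ≤ E := by
    rw [hEdef]
    have h0 : (0:ℝ) ≤ ((D.A y n).length : ℝ) := by positivity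
    have h1 : (0:ℝ) ≤ ((D.C n).length : ℝ) := by positivity
    linarith
  have g2 : ((D.A y n).length : ℝ) * ((n:ℝ) + 1) ≤ E := by
    have h1 : (1:ℝ) ≤ ((D.A y n).length : ℝ) := by exact_mod_cast anpos n
    nlinarith [g1]
  have hKb : |TY - ((D.A y n).length : ℝ) ^ 2 * Sy|
      ≤ ((D.A y n).length : ℝ) ^ 2 * (εf / 4 * ((n:ℝ) + 1) + 2 * M * m) := by
    have h := hTY
    push_cast at h ⊢
    linarith
  have hanr : (0:ℝ) ≤ ((D.A y n).length : ℝ) := by positivity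
  have hcnr : (0:ℝ) ≤ ((D.C n).length : ℝ) := by positivity
  have key : |SxE * ((n:ℝ) + 1) - E * Sy|
      ≤ (εf / 4 * ((n:ℝ) + 1) + 2 * M * m + 4 * M) * E := by
    have e1 : SxE * ((n:ℝ) + 1) - E * Sy
        = ((n:ℝ) + 1) * (S1 + (TY - ((D.A y n).length : ℝ) ^ 2 * Sy))
          - (((D.A y n).length : ℝ) + ((D.C n).length : ℝ)) * Sy := by
      rw [hdec2, hEdef]
      ring
    have hS1' : |S1| ≤ M * (((D.A y n).length : ℝ) + ((D.C n).length : ℝ)) := by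
      have := hS1
      push_cast at this
      linarith
    have hSy' : |Sy| ≤ M * ((n:ℝ) + 1) := by
      have := hSy
      push_cast at this
      linarith
    calc |SxE * ((n:ℝ) + 1) - E * Sy|
        ≤ |((n:ℝ) + 1) * (S1 + (TY - ((D.A y n).length : ℝ) ^ 2 * Sy))|
          + |(((D.A y n).length : ℝ) + ((D.C n).length : ℝ)) * Sy| := by
          rw [e1]; exact abs_sub _ _
      _ = ((n:ℝ) + 1) * |S1 + (TY - ((D.A y n).length : ℝ) ^ 2 * Sy)|
          + (((D.A y n).length : ℝ) + ((D.C n).length : ℝ)) * |Sy| := by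
          rw [abs_mul, abs_mul, abs_of_pos hn1, abs_of_nonneg
            (show (0:ℝ) ≤ ((D.A y n).length : ℝ) + ((D.C n).length : ℝ) by positivity)]
      _ ≤ ((n:ℝ) + 1) * (|S1| + |TY - ((D.A y n).length : ℝ) ^ 2 * Sy|)
          + (((D.A y n).length : ℝ) + ((D.C n).length : ℝ)) * |Sy| := by
          have := abs_add_le S1 (TY - ((D.A y n).length : ℝ) ^ 2 * Sy)
          nlinarith
      _ ≤ (εf / 4 * ((n:ℝ) + 1) + 2 * M * m + 4 * M) * E := by
          have hm0 : (0:ℝ) ≤ (m:ℝ) := by positivity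
          nlinarith [mul_nonneg (mul_nonneg hε.le hn1.le) (sub_nonneg.2 g1),
            mul_nonneg (mul_nonneg (mul_nonneg (by norm_num : (0:ℝ) ≤ 2) hM0) hm0)
              (sub_nonneg.2 g1),
            mul_nonneg hM0 (sub_nonneg.2 g2),
            mul_nonneg (mul_nonneg hM0 hn1.le) (sub_nonneg.2 (hcn)),
            hS1', hSy', hKb]
  -- conclude
  have havg : birkhoffAvg φ (D.T y)
        ((D.A y n).length + (D.C n).length + (D.A y n).length ^ 2 * (n + 1))
      - birkhoffAvg φ y (n + 1)
      = (SxE * ((n:ℝ) + 1) - E * Sy) / (E * ((n:ℝ) + 1)) := by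
    unfold birkhoffAvg
    rw [← hSxEd, ← hSyd, ← hEd]
    push_cast
    rw [div_sub_div _ _ (ne_of_gt hEpos) (ne_of_gt hn1)]
  rw [Real.dist_eq, sub_zero, havg, abs_div, abs_of_pos (mul_pos hEpos hn1)]
  rw [div_lt_iff₀ (mul_pos hEpos hn1)]
  have hfin : (εf / 4 * ((n:ℝ) + 1) + 2 * M * m + 4 * M) * E < εf * (E * ((n:ℝ) + 1)) := by
    have h1 : εf / 4 * ((n:ℝ) + 1) + 2 * M * m + 4 * M < εf / 2 * ((n:ℝ) + 1) := by
      linarith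
    have h2 := mul_lt_mul_of_pos_right h1 hEpos
    nlinarith [mul_pos hn1 hEpos, hεf]
  linarith [key, hfin]

set_option maxHeartbeats 8000000 in
private lemma partA_lem (hM0 : 0 ≤ M) (hM : ∀ u, |φ u| ≤ M) (hφ : Continuous φ)
    (hDy : Filter.Tendsto (fun n => ((D.C n).length : ℝ) / ((D.A y n).length))
      Filter.atTop (nhds 0)) :
    ∀ a : ℝ, Filter.Tendsto (birkhoffAvg φ y) Filter.atTop (nhds a) →
      Filter.Tendsto (birkhoffAvg φ (D.T y)) Filter.atTop (nhds a) := by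
  have anpos : ∀ n, 0 < (D.A y n).length := A_pos D y
  have ange : ∀ n, n + 1 ≤ (D.A y n).length := A_ge D y
  have anmono : ∀ {n nn : ℕ}, n ≤ nn → (D.A y n).length ≤ (D.A y nn).length :=
    fun h => (A_prefix_le D y h).length_le
  have alen : ∀ n, (D.A y (n + 1)).length =
      (D.A y n).length + ((D.C n).length + (D.A y n).length ^ 2 * (n + 1)) + (D.A y n).length :=
    A_len D y
  have hsplit := sum_split (φ := φ) (k := k)
  have hsplit2 := sum_split2 (φ := φ) (k := k)
  have hcrude := sum_crude φ M hM
  have hcrude0 := sum_crude0 φ M hM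
  have hblocks := seg_blocks D y φ M hM0 hM
  have hpartial := seg_partial D y φ M hM0 hM
  have htail := seg_tail D y φ M hM0 hM
  intro a ha
  rw [Metric.tendsto_atTop]
  intro εf hεf
  set C₁ : ℝ := 3 * M + |a| + 5 with hC₁d
  have hC₁ : 0 < C₁ := by rw [hC₁d]; positivity
  set ε : ℝ := εf / (2 * (3 * C₁ + 2)) with hεd
  have hε : 0 < ε := by rw [hεd]; positivity
  obtain ⟨m, hm⟩ := ucont φ hφ hε
  obtain ⟨NY, hNY⟩ := Metric.tendsto_atTop.1 ha ε hε
  have h1 : ∀ s : ℕ, NY + 1 ≤ s →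
      |∑ i ∈ Finset.range s, φ (shift^[i] y) - s * a| ≤ ε * s := by
    intro s hs
    have hspos : (0:ℝ) < (s:ℝ) := by exact_mod_cast (by omega : 0 < s)
    have hd := hNY s (by omega)
    rw [Real.dist_eq] at hd
    unfold birkhoffAvg at hd
    have heq : ∑ i ∈ Finset.range s, φ (shift^[i] y) - (s:ℝ) * a
        = ((∑ i ∈ Finset.range s, φ (shift^[i] y)) / s - a) * s := by
      field_simp
    rw [heq, abs_mul, abs_of_pos hspos]
    exact mul_le_mul_of_nonneg_right hd.le hspos.le
  obtain ⟨NC, hNC⟩ := Metric.tendsto_atTop.1 (hDy) ε hε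
  have h2 : ∀ n, NC ≤ n → ((D.C n).length : ℝ) ≤ ε * ((D.A y n).length : ℝ) := by
    intro n hn
    have h := hNC n hn
    rw [Real.dist_eq, sub_zero] at h
    have hap : (0:ℝ) < ((D.A y n).length : ℝ) := by exact_mod_cast anpos n
    have h3 := (abs_lt.1 h).2
    rw [div_lt_iff₀ hap] at h3
    linarith
  obtain ⟨N₃, hN₃⟩ := exists_nat_gt ((m : ℝ) / ε)
  have h3 : ∀ n : ℕ, N₃ ≤ n → (m:ℝ) ≤ ε * ((n:ℝ) + 1) := by
    intro n hn
    rw [div_lt_iff₀ hε] at hN₃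
    have : (N₃ : ℝ) ≤ (n : ℝ) := by exact_mod_cast hn
    nlinarith
  obtain ⟨N₅, hN₅⟩ := exists_nat_gt ((M + |a|) / ε)
  have h5 : ∀ n : ℕ, N₅ ≤ n → M + |a| ≤ ε * ((n:ℝ) + 1) := by
    intro n hn
    rw [div_lt_iff₀ hε] at hN₅
    have : (N₅ : ℝ) ≤ (n : ℝ) := by exact_mod_cast hn
    nlinarith
  set C₀ : ℝ := 2 * M * m + (M + |a|) * (NY + 1) with hC₀d
  have hC₀ : 0 ≤ C₀ := by rw [hC₀d]; positivity
  obtain ⟨N₆, hN₆⟩ := exists_nat_gt (C₀ / ε)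
  set n₁ : ℕ := max (max (NY + 1) NC) (max (max N₃ N₅) N₆) with hn₁d
  have hn₁NY : NY + 1 ≤ n₁ := le_trans (le_max_left _ _) (le_max_left _ _)
  have hn₁NC : NC ≤ n₁ := le_trans (le_max_right _ _) (le_max_left _ _)
  have hn₁N₃ : N₃ ≤ n₁ := le_trans (le_trans (le_max_left _ _) (le_max_left _ _)) (le_max_right _ _)
  have hn₁N₅ : N₅ ≤ n₁ := le_trans (le_trans (le_max_right _ _) (le_max_left _ _)) (le_max_right _ _)
  have hn₁N₆ : N₆ ≤ n₁ := le_trans (le_max_right _ _) (le_max_right _ _)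
  have hC₀n : ∀ n, n₁ ≤ n → C₀ ≤ ε * ((D.A y n).length : ℝ) := by
    intro n hn
    rw [div_lt_iff₀ hε] at hN₆
    have hna : (N₆ : ℝ) ≤ ((D.A y n).length : ℝ) := by
      have h := ange n
      have : N₆ ≤ (D.A y n).length := by omega
      exact_mod_cast this
    nlinarith
  have hSyall : ∀ s : ℕ, |∑ i ∈ Finset.range s, φ (shift^[i] y) - s * a|
      ≤ ε * s + (M + |a|) * (NY + 1) := by
    intro s
    rcases le_or_gt (NY + 1) s with h | h
    · have hh := h1 s h
      have : (0:ℝ) ≤ (M + |a|) * (NY + 1) := by positivity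
      linarith
    · have hcr := hcrude0 y s
      have hsle : (s : ℝ) ≤ (NY + 1 : ℕ) := by exact_mod_cast h.le
      have h0 : (0:ℝ) ≤ (s:ℝ) := by positivity
      calc |∑ i ∈ Finset.range s, φ (shift^[i] y) - s * a|
          ≤ |∑ i ∈ Finset.range s, φ (shift^[i] y)| + |(s:ℝ) * a| := abs_sub _ _
        _ ≤ M * s + s * |a| := by rw [abs_mul, abs_of_nonneg h0]; linarith
        _ ≤ ε * s + (M + |a|) * (NY + 1) := by
            have : M * s + s * |a| = (M + |a|) * s := by ring
            rw [this]
            have h4 : (M + |a|) * (s:ℝ) ≤ (M + |a|) * ((NY:ℝ) + 1) := by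
              apply mul_le_mul_of_nonneg_left _ (by positivity)
              push_cast at hsle ⊢
              linarith
            have h5 : (0:ℝ) ≤ ε * s := by positivity
            linarith
  -- main per-stage estimate
  have step : ∀ n, n₁ ≤ n → ∀ N : ℕ, (D.A y n).length < N → N ≤ (D.A y (n + 1)).length →
      |∑ i ∈ Finset.range N, φ (shift^[i] (D.T y)) - N * a|
        ≤ |∑ i ∈ Finset.range (D.A y n).length, φ (shift^[i] (D.T y))
            - ((D.A y n).length : ℝ) * a| + C₁ * ε * N := by
    intro n hn N hN1 hN2
    obtain ⟨R, hRdef, hR0⟩ : ∃ R, N = (D.A y n).length + R ∧ 0 < R :=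
      ⟨N - (D.A y n).length, by omega, by omega⟩
    subst hRdef
    rw [hsplit (D.T y) (D.A y n).length R]
    -- generic facts
    have hanr : (0:ℝ) < ((D.A y n).length : ℝ) := by exact_mod_cast anpos n
    have hRr : (0:ℝ) < (R:ℝ) := by exact_mod_cast hR0
    have hMa : (0:ℝ) ≤ M + |a| := by positivity
    have hc2 : ((D.C n).length : ℝ) ≤ ε * ((D.A y n).length : ℝ) := h2 n (le_trans hn₁NC hn)
    have hC₁M : M + |a| ≤ C₁ := by rw [hC₁d]; linarith
    have hm3 : (m:ℝ) ≤ ε * ((n:ℝ) + 1) := h3 n (le_trans hn₁N₃ hn)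
    have hC₀le : C₀ ≤ ε * ((D.A y n).length : ℝ) := hC₀n n hn
    -- reduction to the segment sum
    have habs : ∀ TR : ℝ, |TR - (R:ℝ) * a| ≤ C₁ * ε * (((D.A y n).length + R : ℕ) : ℝ) →
        |∑ i ∈ Finset.range (D.A y n).length, φ (shift^[i] (D.T y)) + TR
            - (((D.A y n).length + R : ℕ) : ℝ) * a|
          ≤ |∑ i ∈ Finset.range (D.A y n).length, φ (shift^[i] (D.T y))
              - ((D.A y n).length : ℝ) * a| + C₁ * ε * (((D.A y n).length + R : ℕ) : ℝ) := by
      intro TR hTR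
      have hsq : ∑ i ∈ Finset.range (D.A y n).length, φ (shift^[i] (D.T y)) + TR
          - (((D.A y n).length + R : ℕ) : ℝ) * a
          = (∑ i ∈ Finset.range (D.A y n).length, φ (shift^[i] (D.T y))
              - ((D.A y n).length : ℝ) * a) + (TR - (R:ℝ) * a) := by
        push_cast
        ring
      rw [hsq]
      exact le_trans (abs_add_le _ _) (by linarith)
    apply habs
    rcases le_or_gt R (D.C n).length with hcase1 | hcase1
    · -- Case 1 : inside C_n
      have hTR := hcrude (D.T y) (D.A y n).length R
      have u1 : (R:ℝ) ≤ ((D.C n).length : ℝ) := by exact_mod_cast hcase1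
      have u2 : (M + |a|) * (R:ℝ) ≤ (M + |a|) * (ε * ((D.A y n).length : ℝ)) :=
        mul_le_mul_of_nonneg_left (le_trans u1 hc2) hMa
      have u4 : (M + |a|) * (ε * ((D.A y n).length : ℝ)) ≤ C₁ * (ε * ((D.A y n).length : ℝ)) :=
        mul_le_mul_of_nonneg_right hC₁M (by positivity)
      have u5 : C₁ * (ε * ((D.A y n).length : ℝ))
          ≤ C₁ * (ε * (((D.A y n).length : ℝ) + (R:ℝ))) := by
        apply mul_le_mul_of_nonneg_left _ hC₁.le
        apply mul_le_mul_of_nonneg_left _ hε.le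
        linarith
      have hcast : (((D.A y n).length + R : ℕ) : ℝ) = ((D.A y n).length : ℝ) + (R:ℝ) := by
        push_cast; ring
      rw [hcast]
      calc |∑ i ∈ Finset.range R, φ (shift^[(D.A y n).length + i] (D.T y)) - (R:ℝ) * a|
          ≤ |∑ i ∈ Finset.range R, φ (shift^[(D.A y n).length + i] (D.T y))| + |(R:ℝ) * a| :=
            abs_sub _ _
        _ ≤ M * R + (R:ℝ) * |a| := by
            rw [abs_mul, abs_of_nonneg hRr.le]
            linarith
        _ ≤ C₁ * ε * (((D.A y n).length : ℝ) + (R:ℝ)) := by nlinarith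
    rcases le_or_gt R ((D.C n).length + (D.A y n).length ^ 2 * (n + 1)) with hcase2 | hcase2
    · -- Case 2 : ends inside the Y-region
      obtain ⟨r, hrdef, hr0⟩ : ∃ r, R = (D.C n).length + r ∧ 0 < r :=
        ⟨R - (D.C n).length, by omega, by omega⟩
      subst hrdef
      rw [hsplit2 (D.T y) (D.A y n).length (D.C n).length r]
      obtain ⟨b, ss, hbs, hslt⟩ : ∃ b ss, r = b * (n + 1) + ss ∧ ss < n + 1 :=
        ⟨r / (n + 1), r % (n + 1), by
          rw [mul_comm]
          exact (Nat.div_add_mod r (n + 1)).symm, Nat.mod_lt _ (by omega)⟩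
      have hble : b * (n + 1) + ss ≤ (D.A y n).length ^ 2 * (n + 1) := by omega
      have hbK : b ≤ (D.A y n).length ^ 2 := by
        have hb1 : b * (n + 1) ≤ (D.A y n).length ^ 2 * (n + 1) := by omega
        exact Nat.le_of_mul_le_mul_right (by omega) (show 0 < n + 1 by omega)
      subst hbs
      rw [hsplit2 (D.T y) ((D.A y n).length + (D.C n).length) (b * (n + 1)) ss]
      have E_b := hblocks ε hε.le m hm n b hbK
      have E_s := hpartial ε hε.le m hm n b ss hble (by omega)
      have hSy1 := h1 (n + 1) (by omega)
      have hSys := hSyall ss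
      have hTC := hcrude (D.T y) (D.A y n).length (D.C n).length
      have hdec : ∑ i ∈ Finset.range (D.C n).length, φ (shift^[(D.A y n).length + i] (D.T y))
            + (∑ i ∈ Finset.range (b * (n + 1)),
                φ (shift^[(D.A y n).length + (D.C n).length + i] (D.T y))
              + ∑ i ∈ Finset.range ss,
                φ (shift^[(D.A y n).length + (D.C n).length + b * (n + 1) + i] (D.T y)))
            - ((D.C n).length + (b * (n + 1) + ss) : ℕ) * a
          = (∑ i ∈ Finset.range (D.C n).length, φ (shift^[(D.A y n).length + i] (D.T y))
              - ((D.C n).length : ℝ) * a)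
            + ((∑ i ∈ Finset.range (b * (n + 1)),
                  φ (shift^[(D.A y n).length + (D.C n).length + i] (D.T y))
                - (b:ℝ) * ∑ i ∈ Finset.range (n + 1), φ (shift^[i] y))
              + ((b:ℝ) * ((∑ i ∈ Finset.range (n + 1), φ (shift^[i] y)) - ((n:ℝ) + 1) * a)
                + ((∑ i ∈ Finset.range ss,
                      φ (shift^[(D.A y n).length + (D.C n).length + b * (n + 1) + i] (D.T y))
                    - ∑ i ∈ Finset.range ss, φ (shift^[i] y))
                  + ((∑ i ∈ Finset.range ss, φ (shift^[i] y)) - (ss:ℝ) * a)))) := by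
        push_cast
        ring
      rw [hdec]
      refine le_trans (abs_add5 _ _ _ _ _) ?_
      -- individual bounds
      have T1 : |∑ i ∈ Finset.range (D.C n).length, φ (shift^[(D.A y n).length + i] (D.T y))
          - ((D.C n).length : ℝ) * a| ≤ (M + |a|) * ((D.C n).length : ℝ) := by
        calc _ ≤ |∑ i ∈ Finset.range (D.C n).length,
                φ (shift^[(D.A y n).length + i] (D.T y))| + |((D.C n).length : ℝ) * a| :=
              abs_sub _ _
          _ ≤ (M + |a|) * ((D.C n).length : ℝ) := by
              rw [abs_mul, abs_of_nonneg (by positivity : (0:ℝ) ≤ ((D.C n).length : ℝ))]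
              have := hTC
              nlinarith
      have T3 : |(b:ℝ) * ((∑ i ∈ Finset.range (n + 1), φ (shift^[i] y)) - ((n:ℝ) + 1) * a)|
          ≤ (b:ℝ) * (ε * ((n:ℝ) + 1)) := by
        rw [abs_mul, abs_of_nonneg (by positivity : (0:ℝ) ≤ (b:ℝ))]
        apply mul_le_mul_of_nonneg_left _ (by positivity)
        have h := hSy1
        push_cast at h
        linarith
      have T5 : |(∑ i ∈ Finset.range ss, φ (shift^[i] y)) - (ss:ℝ) * a|
          ≤ ε * ss + (M + |a|) * ((NY:ℝ) + 1) := by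
        have h := hSys
        push_cast at h ⊢
        linarith
      have E_b' : |∑ i ∈ Finset.range (b * (n + 1)),
            φ (shift^[(D.A y n).length + (D.C n).length + i] (D.T y))
          - (b:ℝ) * ∑ i ∈ Finset.range (n + 1), φ (shift^[i] y)|
          ≤ (b:ℝ) * (ε * ((n:ℝ) + 1) + 2 * M * m) := by
        have h := E_b
        push_cast at h ⊢
        linarith
      have E_s' : |∑ i ∈ Finset.range ss,
            φ (shift^[(D.A y n).length + (D.C n).length + b * (n + 1) + i] (D.T y))
          - ∑ i ∈ Finset.range ss, φ (shift^[i] y)| ≤ ε * ss + 2 * M * m := by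
        have h := E_s
        push_cast at h ⊢
        linarith
      -- final numeric bound
      have hcast : (((D.A y n).length + ((D.C n).length + (b * (n + 1) + ss)) : ℕ) : ℝ)
          = ((D.A y n).length : ℝ) + ((D.C n).length : ℝ)
            + (b:ℝ) * ((n:ℝ) + 1) + (ss:ℝ) := by push_cast; ring
      rw [hcast]
      have q0 : (0:ℝ) ≤ (b:ℝ) := by positivity
      have q1 : (M + |a|) * ((D.C n).length : ℝ) ≤ (M + |a|) * (ε * ((D.A y n).length : ℝ)) :=
        mul_le_mul_of_nonneg_left hc2 hMa
      have q2 : 2 * M * (m:ℝ) * (b:ℝ) ≤ 2 * M * (ε * ((n:ℝ) + 1)) * (b:ℝ) := by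
        apply mul_le_mul_of_nonneg_right _ q0
        nlinarith
      have q3 : 2 * M * (m:ℝ) + (M + |a|) * ((NY:ℝ) + 1) ≤ ε * ((D.A y n).length : ℝ) := by
        rw [hC₀d] at hC₀le
        push_cast at hC₀le ⊢
        linarith
      rw [hC₁d]
      have pAN : (0:ℝ) ≤ ε * ((D.A y n).length : ℝ) := by positivity
      have pCN : (0:ℝ) ≤ ε * ((D.C n).length : ℝ) := by positivity
      have pB : (0:ℝ) ≤ ε * ((b:ℝ) * ((n:ℝ) + 1)) := by positivity
      have pS : (0:ℝ) ≤ ε * (ss:ℝ) := by positivity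
      have ha0 : (0:ℝ) ≤ |a| := abs_nonneg a
      have w1 := mul_nonneg hM0 pAN
      have w2 := mul_nonneg hM0 pCN
      have w3 := mul_nonneg hM0 pB
      have w4 := mul_nonneg hM0 pS
      have w5 := mul_nonneg ha0 pAN
      have w6 := mul_nonneg ha0 pCN
      have w7 := mul_nonneg ha0 pB
      have w8 := mul_nonneg ha0 pS
      linarith [T1, T3, T5, E_b', E_s', q1, q2, q3, pAN, pCN, pB, pS,
        w1, w2, w3, w4, w5, w6, w7, w8]
    · -- Case 3 : ends inside the trailing copy of A_n
      have halen := alen n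
      obtain ⟨t, htdef, ht0, htle⟩ : ∃ t,
          R = (D.C n).length + ((D.A y n).length ^ 2 * (n + 1) + t) ∧ 0 < t
            ∧ t ≤ (D.A y n).length := by
        refine ⟨R - (D.C n).length - (D.A y n).length ^ 2 * (n + 1), by omega, by omega, by omega⟩
      subst htdef
      rw [hsplit2 (D.T y) (D.A y n).length (D.C n).length
        ((D.A y n).length ^ 2 * (n + 1) + t)]
      rw [hsplit2 (D.T y) ((D.A y n).length + (D.C n).length)
        ((D.A y n).length ^ 2 * (n + 1)) t]
      have E_K := hblocks ε hε.le m hm n ((D.A y n).length ^ 2) le_rfl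
      have E_t := htail ε hε.le m hm n t htle
      have hSy1 := h1 (n + 1) (by omega)
      have hTC := hcrude (D.T y) (D.A y n).length (D.C n).length
      have hSxt := hcrude0 (D.T y) t
      have hdec : ∑ i ∈ Finset.range (D.C n).length, φ (shift^[(D.A y n).length + i] (D.T y))
            + (∑ i ∈ Finset.range ((D.A y n).length ^ 2 * (n + 1)),
                φ (shift^[(D.A y n).length + (D.C n).length + i] (D.T y))
              + ∑ i ∈ Finset.range t,
                φ (shift^[(D.A y n).length + (D.C n).length
                  + (D.A y n).length ^ 2 * (n + 1) + i] (D.T y)))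
            - ((D.C n).length + ((D.A y n).length ^ 2 * (n + 1) + t) : ℕ) * a
          = (∑ i ∈ Finset.range (D.C n).length, φ (shift^[(D.A y n).length + i] (D.T y))
              - ((D.C n).length : ℝ) * a)
            + ((∑ i ∈ Finset.range ((D.A y n).length ^ 2 * (n + 1)),
                  φ (shift^[(D.A y n).length + (D.C n).length + i] (D.T y))
                - (((D.A y n).length : ℝ) ^ 2) * ∑ i ∈ Finset.range (n + 1), φ (shift^[i] y))
              + ((((D.A y n).length : ℝ) ^ 2)
                    * ((∑ i ∈ Finset.range (n + 1), φ (shift^[i] y)) - ((n:ℝ) + 1) * a)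
                + ((∑ i ∈ Finset.range t,
                      φ (shift^[(D.A y n).length + (D.C n).length
                        + (D.A y n).length ^ 2 * (n + 1) + i] (D.T y))
                    - ∑ i ∈ Finset.range t, φ (shift^[i] (D.T y)))
                  + ((∑ i ∈ Finset.range t, φ (shift^[i] (D.T y))) - (t:ℝ) * a)))) := by
        push_cast
        ring
      rw [hdec]
      refine le_trans (abs_add5 _ _ _ _ _) ?_
      have T1 : |∑ i ∈ Finset.range (D.C n).length, φ (shift^[(D.A y n).length + i] (D.T y))
          - ((D.C n).length : ℝ) * a| ≤ (M + |a|) * ((D.C n).length : ℝ) := by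
        calc _ ≤ |∑ i ∈ Finset.range (D.C n).length,
                φ (shift^[(D.A y n).length + i] (D.T y))| + |((D.C n).length : ℝ) * a| :=
              abs_sub _ _
          _ ≤ (M + |a|) * ((D.C n).length : ℝ) := by
              rw [abs_mul, abs_of_nonneg (by positivity : (0:ℝ) ≤ ((D.C n).length : ℝ))]
              have := hTC
              nlinarith
      have T3 : |(((D.A y n).length : ℝ) ^ 2)
            * ((∑ i ∈ Finset.range (n + 1), φ (shift^[i] y)) - ((n:ℝ) + 1) * a)|
          ≤ (((D.A y n).length : ℝ) ^ 2) * (ε * ((n:ℝ) + 1)) := by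
        rw [abs_mul, abs_of_nonneg (by positivity : (0:ℝ) ≤ (((D.A y n).length : ℝ) ^ 2))]
        apply mul_le_mul_of_nonneg_left _ (by positivity)
        have h := hSy1
        push_cast at h
        linarith
      have T5 : |(∑ i ∈ Finset.range t, φ (shift^[i] (D.T y))) - (t:ℝ) * a|
          ≤ (M + |a|) * ((D.A y n).length : ℝ) := by
        have htr : (t:ℝ) ≤ ((D.A y n).length : ℝ) := by exact_mod_cast htle
        have ht0' : (0:ℝ) ≤ (t:ℝ) := by positivity
        calc _ ≤ |∑ i ∈ Finset.range t, φ (shift^[i] (D.T y))| + |(t:ℝ) * a| := abs_sub _ _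
          _ ≤ (M + |a|) * ((D.A y n).length : ℝ) := by
              rw [abs_mul, abs_of_nonneg ht0']
              nlinarith [hSxt]
      have E_K' : |∑ i ∈ Finset.range ((D.A y n).length ^ 2 * (n + 1)),
            φ (shift^[(D.A y n).length + (D.C n).length + i] (D.T y))
          - (((D.A y n).length : ℝ) ^ 2) * ∑ i ∈ Finset.range (n + 1), φ (shift^[i] y)|
          ≤ (((D.A y n).length : ℝ) ^ 2) * (ε * ((n:ℝ) + 1) + 2 * M * m) := by
        have h := E_K
        push_cast at h ⊢
        linarith
      have E_t' : |∑ i ∈ Finset.range t,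
            φ (shift^[(D.A y n).length + (D.C n).length
              + (D.A y n).length ^ 2 * (n + 1) + i] (D.T y))
          - ∑ i ∈ Finset.range t, φ (shift^[i] (D.T y))| ≤ ε * t + 2 * M * m := by
        have h := E_t
        push_cast at h ⊢
        linarith
      have hcast : (((D.A y n).length
            + ((D.C n).length + ((D.A y n).length ^ 2 * (n + 1) + t)) : ℕ) : ℝ)
          = ((D.A y n).length : ℝ) + ((D.C n).length : ℝ)
            + (((D.A y n).length : ℝ) ^ 2) * ((n:ℝ) + 1) + (t:ℝ) := by push_cast; ring
      rw [hcast]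
      -- auxiliary inequalities
      have hK0 : (0:ℝ) ≤ (((D.A y n).length : ℝ) ^ 2) := by positivity
      have q1 : (M + |a|) * ((D.C n).length : ℝ) ≤ (M + |a|) * (ε * ((D.A y n).length : ℝ)) :=
        mul_le_mul_of_nonneg_left hc2 hMa
      have q2 : 2 * M * (m:ℝ) * (((D.A y n).length : ℝ) ^ 2)
          ≤ 2 * M * (ε * ((n:ℝ) + 1)) * (((D.A y n).length : ℝ) ^ 2) := by
        apply mul_le_mul_of_nonneg_right _ hK0
        nlinarith
      have q3 : 2 * M * (m:ℝ) ≤ ε * ((D.A y n).length : ℝ) := by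
        rw [hC₀d] at hC₀le
        have : (0:ℝ) ≤ (M + |a|) * ((NY:ℝ) + 1) := by positivity
        push_cast at hC₀le
        linarith
      have q4 : (M + |a|) * ((D.A y n).length : ℝ)
          ≤ ε * (((D.A y n).length : ℝ) ^ 2 * ((n:ℝ) + 1)) := by
        have h5' := h5 n (le_trans hn₁N₅ hn)
        have han1 : (1:ℝ) ≤ ((D.A y n).length : ℝ) := by
          exact_mod_cast anpos n
        have e1 : (M + |a|) * ((D.A y n).length : ℝ)
            ≤ (ε * ((n:ℝ) + 1)) * ((D.A y n).length : ℝ) :=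
          mul_le_mul_of_nonneg_right h5' hanr.le
        have e2 : (ε * ((n:ℝ) + 1)) * ((D.A y n).length : ℝ)
            ≤ (ε * ((n:ℝ) + 1)) * (((D.A y n).length : ℝ) ^ 2) := by
          apply mul_le_mul_of_nonneg_left _ (by positivity)
          nlinarith
        linarith
      rw [hC₁d]
      have pAN : (0:ℝ) ≤ ε * ((D.A y n).length : ℝ) := by positivity
      have pCN : (0:ℝ) ≤ ε * ((D.C n).length : ℝ) := by positivity
      have pK : (0:ℝ) ≤ ε * ((((D.A y n).length : ℝ) ^ 2) * ((n:ℝ) + 1)) := by positivity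
      have pT : (0:ℝ) ≤ ε * (t:ℝ) := by positivity
      have ha0 : (0:ℝ) ≤ |a| := abs_nonneg a
      have w1 := mul_nonneg hM0 pAN
      have w2 := mul_nonneg hM0 pCN
      have w3 := mul_nonneg hM0 pK
      have w4 := mul_nonneg hM0 pT
      have w5 := mul_nonneg ha0 pAN
      have w6 := mul_nonneg ha0 pCN
      have w7 := mul_nonneg ha0 pK
      have w8 := mul_nonneg ha0 pT
      linarith [T1, T3, T5, E_K', E_t', q1, q2, q3, q4, pAN, pCN, pK, pT,
        w1, w2, w3, w4, w5, w6, w7, w8]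
  -- telescoping
  have anstrict : ∀ n : ℕ, (D.A y n).length < (D.A y (n + 1)).length := by
    intro n
    have h := alen n
    have := anpos n
    omega
  have h2an : ∀ n : ℕ, 2 * (D.A y n).length ≤ (D.A y (n + 1)).length := by
    intro n
    have h := alen n
    omega
  have tel : ∀ j : ℕ,
      |∑ i ∈ Finset.range (D.A y (n₁ + j)).length, φ (shift^[i] (D.T y))
          - ((D.A y (n₁ + j)).length : ℝ) * a|
        ≤ |∑ i ∈ Finset.range (D.A y n₁).length, φ (shift^[i] (D.T y))
            - ((D.A y n₁).length : ℝ) * a| + 2 * C₁ * ε * (D.A y (n₁ + j)).length := by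
    intro j
    induction j with
    | zero =>
        simp only [Nat.add_zero]
        have : (0:ℝ) ≤ 2 * C₁ * ε * (D.A y n₁).length := by positivity
        linarith
    | succ j ih =>
        have hidx : n₁ + (j + 1) = (n₁ + j) + 1 := by omega
        rw [hidx]
        have hstep := step (n₁ + j) (by omega) (D.A y ((n₁ + j) + 1)).length
          (anstrict (n₁ + j)) le_rfl
        have hmono : (2 : ℝ) * (D.A y (n₁ + j)).length ≤ (D.A y ((n₁ + j) + 1)).length := by
          exact_mod_cast h2an (n₁ + j)
        have hCε : (0:ℝ) ≤ C₁ * ε := by positivity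
        nlinarith [hstep, ih]
  -- conclusion
  obtain ⟨N₇, hN₇⟩ := exists_nat_gt
    (|∑ i ∈ Finset.range (D.A y n₁).length, φ (shift^[i] (D.T y))
      - ((D.A y n₁).length : ℝ) * a| / ε)
  refine ⟨(D.A y n₁).length + N₇ + 1, fun N hN => ?_⟩
  have hmem : (D.A y n₁).length < N := by omega
  have hn₁N : n₁ ≤ N := by
    have := ange n₁
    omega
  obtain ⟨n, hge, hfg1, hup⟩ : ∃ nn : ℕ, n₁ ≤ nn ∧ (D.A y nn).length < N ∧
      N ≤ (D.A y (nn + 1)).length := by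
    refine ⟨Nat.findGreatest (fun j => (D.A y j).length < N) N,
      Nat.le_findGreatest hn₁N hmem,
      Nat.findGreatest_spec (P := fun j => (D.A y j).length < N) hn₁N hmem, ?_⟩
    by_contra hcon
    push_neg at hcon
    have hnb : Nat.findGreatest (fun j => (D.A y j).length < N) N + 1 ≤ N := by
      have h6 := ange (Nat.findGreatest (fun j => (D.A y j).length < N) N + 1)
      omega
    exact Nat.findGreatest_is_greatest (P := fun j => (D.A y j).length < N)
      (Nat.lt_succ_self _) hnb hcon
  have htel := tel (n - n₁)
  rw [show n₁ + (n - n₁) = n from by omega] at htel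
  have hstepN := step n hge N hfg1 hup
  have hPn1 : |∑ i ∈ Finset.range (D.A y n₁).length, φ (shift^[i] (D.T y))
      - ((D.A y n₁).length : ℝ) * a| ≤ ε * N := by
    rw [div_lt_iff₀ hε] at hN₇
    have h7 : (N₇ : ℝ) ≤ (N : ℝ) := by exact_mod_cast (by omega : N₇ ≤ N)
    have h8 : ε * N₇ ≤ ε * N := mul_le_mul_of_nonneg_left h7 hε.le
    linarith [hN₇, h8]
  have hanN : ((D.A y n).length : ℝ) ≤ (N : ℝ) := by exact_mod_cast hfg1.le
  have hNpos : (0:ℝ) < (N:ℝ) := by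
    have : 0 < N := by omega
    exact_mod_cast this
  have hfinal : |∑ i ∈ Finset.range N, φ (shift^[i] (D.T y)) - N * a|
      ≤ (3 * C₁ + 1) * ε * N := by
    have h8 : 2 * C₁ * ε * ((D.A y n).length : ℝ) ≤ 2 * C₁ * ε * N :=
      mul_le_mul_of_nonneg_left hanN (by positivity)
    linarith [hstepN, htel, hPn1, h8]
  rw [Real.dist_eq]
  unfold birkhoffAvg
  have heq2 : (∑ i ∈ Finset.range N, φ (shift^[i] (D.T y))) / N - a
      = (∑ i ∈ Finset.range N, φ (shift^[i] (D.T y)) - N * a) / N := by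
    field_simp
  rw [heq2, abs_div, abs_of_pos hNpos, div_lt_iff₀ hNpos]
  have hC₁ε : (3 * C₁ + 1) * ε < εf := by
    have hlt : (3 * C₁ + 1) < 2 * (3 * C₁ + 2) := by linarith
    calc (3 * C₁ + 1) * ε < (2 * (3 * C₁ + 2)) * ε := mul_lt_mul_of_pos_right hlt hε
      _ = εf := by rw [hεd]; field_simp
  have h9 := mul_lt_mul_of_pos_right hC₁ε hNpos
  have h10 : (0:ℝ) ≤ ε * N := by positivity
  linarith [hfinal, h9]

end Analytic

set_option maxHeartbeats 1000000 in
/-- **Proposition.** For the map `T` constructed from the proper subshift `Π_L` and any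
continuous `φ : Σ_k → ℝ`: `T` maps `I_φ(σ) ∩ Π_L` into `I_φ(σ)` (divergent Birkhoff
averages stay divergent) and, for every `a ∈ ℝ`, maps `R_φ(a) ∩ Π_L` into `R_φ(a)`
(Birkhoff averages converging to `a` stay convergent to `a`). -/
theorem T_preserves_irregular_and_level_sets (k L : ℕ) (hk : 2 ≤ k) (hL : 3 ≤ L)
    (D : TData k (PiL k L)) (hD : D.Small)
    (φ : (ℕ → Fin k) → ℝ) (hφ : Continuous φ)
    (y : ℕ → Fin k) (hy : y ∈ PiL k L) :
    ((¬ ∃ c : ℝ, Filter.Tendsto (birkhoffAvg φ y) Filter.atTop (nhds c)) →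
      ¬ ∃ c : ℝ, Filter.Tendsto (birkhoffAvg φ (D.T y)) Filter.atTop (nhds c)) ∧
    (∀ a : ℝ, Filter.Tendsto (birkhoffAvg φ y) Filter.atTop (nhds a) →
      Filter.Tendsto (birkhoffAvg φ (D.T y)) Filter.atTop (nhds a)) := by
  classical
  obtain ⟨M, hM0, hM⟩ : ∃ M : ℝ, 0 ≤ M ∧ ∀ u, |φ u| ≤ M := by
    obtain ⟨M, hM⟩ := (isCompact_range hφ.abs).bddAbove
    refine ⟨M, le_trans (abs_nonneg _) (hM ⟨fun _ => ⟨0, by omega⟩, rfl⟩), fun u => hM ⟨u, rfl⟩⟩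
  have ange : ∀ n, n + 1 ≤ (D.A y n).length := A_ge D y
  have hend := end_est D y φ M hM0 hM hφ (hD y)
  refine ⟨?_, partA_lem D y φ M hM0 hM hφ (hD y)⟩
  intro hdiv hcon
  obtain ⟨cc, hc⟩ := hcon
  apply hdiv
  refine ⟨cc, ?_⟩
  have hEtop : Filter.Tendsto
      (fun n => (D.A y n).length + (D.C n).length + (D.A y n).length ^ 2 * (n + 1))
      Filter.atTop Filter.atTop := by
    apply Filter.tendsto_atTop_mono (fun n => ?_) Filter.tendsto_id
    have := ange n
    simp only [id]
    omega
  have h1 : Filter.Tendsto (fun n => birkhoffAvg φ (D.T y)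
      ((D.A y n).length + (D.C n).length + (D.A y n).length ^ 2 * (n + 1)))
      Filter.atTop (nhds cc) := hc.comp hEtop
  have h2 := h1.sub hend
  simp only [sub_sub_cancel, sub_zero] at h2
  exact (Filter.tendsto_add_atTop_iff_nat 1).mp h2
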